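/- arXiv:1607.00979 — 2 statements merged into one kernel-verified Lean document; each statement's English description precedes it below -/
import Mathlib

section
/- Let κ ≤ 0, γ ∈ ℝ and c > 0 be fixed with κ + γ ≤ 0. Then there exist constants 0 < c₁ ≤ c₂ (depending only on κ, γ, c) such that c₁ z^{2κ}(z² + A)^γ ≤ sup_{t>0} t^κ (t + A)^γ exp(−c z²/t) ≤ c₂ z^{2κ}(z² + A)^γ for all A ≥ 0 and z > 0. -/
/-!
Write `g t = t ^ κ * (t + A) ^ γ`. The choice `t = z²` gives the lower bound with `c₁ = exp (-c)`.
For the upper bound, `g` is antitone when `κ ≤ 0` and `κ + γ ≤ 0`, so for `t ≥ z²` the supremand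
is at most `g (z²)`. For `t < z²` put `s = z² / t ≥ 1`: then `g t ≤ s ^ (|κ| + |γ|) * g (z²)`,
and the polynomial factor is absorbed by `exp (-c s)`, which is what the Gaussian factor becomes.
-/

open Real Set

theorem rpow_mul_exp_neg_mul_le {p c s : ℝ} (hc : 0 < c) (hs : 1 ≤ s) :
    s ^ p * exp (-(c * s)) ≤ (⌈p⌉₊).factorial / c ^ ⌈p⌉₊ := by
  set n := ⌈p⌉₊
  have hpow : s ^ p ≤ s ^ n := by
    rw [← rpow_natCast]; exact rpow_le_rpow_of_exponent_le hs (Nat.le_ceil p)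
  have hexp : (c * s) ^ n / n.factorial ≤ exp (c * s) :=
    pow_div_factorial_le_exp _ (by positivity) n
  calc s ^ p * exp (-(c * s)) ≤ s ^ n * exp (-(c * s)) := by gcongr
    _ = (c * s) ^ n / n.factorial * exp (-(c * s)) * (n.factorial / c ^ n) := by
      field_simp; ring
    _ ≤ exp (c * s) * exp (-(c * s)) * (n.factorial / c ^ n) := by gcongr
    _ = n.factorial / c ^ n := by rw [← exp_add, add_neg_cancel, exp_zero, one_mul]

theorem rpow_le_rpow_abs_mul_rpow {x y r γ : ℝ} (hx : 0 < x) (hxy : x ≤ y) (hyr : y ≤ r * x) :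
    x ^ γ ≤ r ^ |γ| * y ^ γ := by
  have hr : 1 ≤ r := le_of_mul_le_mul_right (by linarith) hx
  rcases le_or_gt 0 γ with hγ | hγ
  · calc x ^ γ ≤ y ^ γ := rpow_le_rpow hx.le hxy hγ
      _ ≤ r ^ |γ| * y ^ γ :=
          le_mul_of_one_le_left (rpow_nonneg (by linarith) _) (one_le_rpow hr (abs_nonneg γ))
  · have hry : r ^ γ * x ^ γ ≤ y ^ γ := by
      rw [← mul_rpow (by linarith) hx.le]
      exact rpow_le_rpow_of_nonpos (by linarith) hyr hγ.le
    calc x ^ γ = r ^ |γ| * (r ^ γ * x ^ γ) := by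
          rw [abs_of_neg hγ, ← mul_assoc, ← rpow_add (by linarith), neg_add_cancel, rpow_zero,
            one_mul]
      _ ≤ r ^ |γ| * y ^ γ := mul_le_mul_of_nonneg_left hry (rpow_nonneg (by linarith) _)

theorem rpow_mul_add_rpow_le_of_le {κ γ A t t' : ℝ} (ht : 0 < t) (htt' : t ≤ t') (hA : 0 ≤ A) :
    t ^ κ * (t + A) ^ γ ≤ (t' / t) ^ (|κ| + |γ|) * (t' ^ κ * (t' + A) ^ γ) := by
  have hκ := rpow_le_rpow_abs_mul_rpow (γ := κ) ht htt' (r := t' / t)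
    (div_mul_cancel₀ t' ht.ne').ge
  have hγ := rpow_le_rpow_abs_mul_rpow (γ := γ) (x := t + A) (y := t' + A) (r := t' / t)
    (by positivity) (by linarith) (by
      rw [mul_add, div_mul_cancel₀ _ ht.ne']
      have : 1 ≤ t' / t := (one_le_div ht).2 htt'
      nlinarith)
  have ht' : 0 < t' := ht.trans_le htt'
  rw [rpow_add (by positivity)]
  calc t ^ κ * (t + A) ^ γ ≤ ((t' / t) ^ |κ| * t' ^ κ) * ((t' / t) ^ |γ| * (t' + A) ^ γ) :=
        mul_le_mul hκ hγ (by positivity) (by positivity)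
    _ = _ := by ring

theorem rpow_mul_add_rpow_antitoneOn {κ γ A : ℝ} (hκ : κ ≤ 0) (hκγ : κ + γ ≤ 0) (hA : 0 ≤ A) :
    AntitoneOn (fun t : ℝ => t ^ κ * (t + A) ^ γ) (Ioi 0) := by
  intro t ht t' ht' htt'
  simp only [mem_Ioi] at ht ht'
  rcases le_or_gt 0 γ with hγ | hγ
  · set r := t' / t
    have hr : 1 ≤ r := (one_le_div ht).2 htt'
    have ht'r : t' = r * t := (div_mul_cancel₀ t' ht.ne').symm
    have hκ' : t' ^ κ = r ^ κ * t ^ κ := by rw [ht'r, mul_rpow (by positivity) ht.le]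
    have hγ' : (t' + A) ^ γ ≤ r ^ γ * (t + A) ^ γ := by
      rw [← mul_rpow (by positivity) (by positivity)]
      exact rpow_le_rpow (by positivity) (by rw [ht'r]; nlinarith) hγ
    calc t' ^ κ * (t' + A) ^ γ ≤ (r ^ κ * t ^ κ) * (r ^ γ * (t + A) ^ γ) := by
          rw [hκ']; gcongr
      _ = r ^ (κ + γ) * (t ^ κ * (t + A) ^ γ) := by rw [rpow_add (by positivity)]; ring
      _ ≤ t ^ κ * (t + A) ^ γ :=
          mul_le_of_le_one_left (by positivity) (rpow_le_one_of_one_le_of_nonpos hr hκγ)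
  · exact mul_le_mul (rpow_le_rpow_of_nonpos ht htt' hκ)
      (rpow_le_rpow_of_nonpos (by positivity) (by linarith) hγ.le) (by positivity) (by positivity)

theorem rpow_mul_add_rpow_mul_exp_le {κ γ c A u t M : ℝ} (hκ : κ ≤ 0) (hκγ : κ + γ ≤ 0)
    (hc : 0 ≤ c) (hA : 0 ≤ A) (hu : 0 < u) (ht : 0 < t)
    (hM : ∀ s : ℝ, 1 ≤ s → s ^ (|κ| + |γ|) * exp (-(c * s)) ≤ M) :
    t ^ κ * (t + A) ^ γ * exp (-c * u / t) ≤ max 1 M * (u ^ κ * (u + A) ^ γ) := by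
  rcases le_or_gt u t with hut | htu
  · have hexp : exp (-c * u / t) ≤ 1 := exp_le_one_iff.2 (by
      have : 0 ≤ c * u / t := by positivity
      rw [neg_mul, neg_div]; linarith)
    calc t ^ κ * (t + A) ^ γ * exp (-c * u / t) ≤ t ^ κ * (t + A) ^ γ :=
          mul_le_of_le_one_right (by positivity) hexp
      _ ≤ u ^ κ * (u + A) ^ γ := rpow_mul_add_rpow_antitoneOn hκ hκγ hA hu ht hut
      _ ≤ max 1 M * (u ^ κ * (u + A) ^ γ) :=
          le_mul_of_one_le_left (by positivity) (le_max_left _ _)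
  · have hs : 1 ≤ u / t := (one_le_div ht).2 htu.le
    calc t ^ κ * (t + A) ^ γ * exp (-c * u / t)
        ≤ (u / t) ^ (|κ| + |γ|) * (u ^ κ * (u + A) ^ γ) * exp (-(c * (u / t))) := by
          rw [mul_div_assoc, neg_mul]
          exact mul_le_mul_of_nonneg_right (rpow_mul_add_rpow_le_of_le ht htu.le hA) (exp_nonneg _)
      _ = ((u / t) ^ (|κ| + |γ|) * exp (-(c * (u / t)))) * (u ^ κ * (u + A) ^ γ) := by ring
      _ ≤ max 1 M * (u ^ κ * (u + A) ^ γ) := by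
          gcongr
          exact (hM _ hs).trans (le_max_right _ _)

/-- For fixed `κ ≤ 0`, `γ ∈ ℝ`, `c > 0` with `κ + γ ≤ 0`, there exist
`0 < c₁ ≤ c₂` such that
`c₁ z^{2κ}(z² + A)^γ ≤ sup_{t>0} t^κ (t + A)^γ exp(−c z²/t) ≤ c₂ z^{2κ}(z² + A)^γ`
for all `A ≥ 0` and `z > 0`. -/
theorem stmt1 (κ γ c : ℝ) (hκ : κ ≤ 0) (hc : 0 < c) (hκγ : κ + γ ≤ 0) :
    ∃ c₁ c₂ : ℝ, 0 < c₁ ∧ c₁ ≤ c₂ ∧ ∀ A z : ℝ, 0 ≤ A → 0 < z →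
      c₁ * (z ^ (2 * κ) * (z ^ 2 + A) ^ γ) ≤
        sSup {v : ℝ | ∃ t : ℝ, 0 < t ∧ v = t ^ κ * (t + A) ^ γ * Real.exp (-c * z ^ 2 / t)} ∧
      sSup {v : ℝ | ∃ t : ℝ, 0 < t ∧ v = t ^ κ * (t + A) ^ γ * Real.exp (-c * z ^ 2 / t)} ≤
        c₂ * (z ^ (2 * κ) * (z ^ 2 + A) ^ γ) := by
  set M : ℝ := (⌈|κ| + |γ|⌉₊).factorial / c ^ ⌈|κ| + |γ|⌉₊
  refine ⟨exp (-c), max 1 M, exp_pos _,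
    (exp_le_one_iff.2 (by linarith)).trans (le_max_left _ _), fun A z hA hz => ?_⟩
  have hz2 : 0 < z ^ 2 := by positivity
  set S := {v : ℝ | ∃ t : ℝ, 0 < t ∧ v = t ^ κ * (t + A) ^ γ * exp (-c * z ^ 2 / t)}
  rw [show (2 : ℝ) * κ = (2 : ℕ) * κ by norm_num, rpow_natCast_mul hz.le]
  have hub : ∀ v ∈ S, v ≤ max 1 M * ((z ^ 2) ^ κ * (z ^ 2 + A) ^ γ) := by
    rintro v ⟨t, ht, rfl⟩
    exact rpow_mul_add_rpow_mul_exp_le hκ hκγ hc.le hA hz2 ht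
      (fun s hs => rpow_mul_exp_neg_mul_le hc hs)
  have hmem : exp (-c) * ((z ^ 2) ^ κ * (z ^ 2 + A) ^ γ) ∈ S :=
    ⟨z ^ 2, hz2, by rw [mul_div_assoc, div_self hz2.ne', mul_one, mul_comm]⟩
  exact ⟨le_csSup ⟨_, hub⟩ hmem, csSup_le ⟨_, hmem⟩ hub⟩
end

section
/- Let β ≤ −1 and γ > −1. Define, for measurable f ≥ 0 and x > 0, N₂^β f(x) = χ_{(0,1)}(x) ∫_0^∞ [ (xy)^{−2β} sup_{1/4<s<1} (1−s)^{−2β} K_s^{−β}(x,y) ] f(y) dν_β(y) and N₃^γ f(x) = χ_{(0,1)}(x) ∫_0^∞ [ sup_{1/4<s<1} K_s^γ(x,y) ] f(y) dν_γ(y). Then N₂^β is of strong type (1,1) with respect to ν_β and N₃^γ is of strong type (1,1) with respect to ν_γ; i.e. there are constants C (depending only on β, resp. γ) such that ∫_0^∞ N₂^β f dν_β ≤ C ∫_0^∞ f dν_β and ∫_0^∞ N₃^γ f dν_γ ≤ C ∫_0^∞ f dν_γ for every nonnegative f in the respective L¹ space. -/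
open MeasureTheory

/-- In dimension one, the measure `ν_β` on `(0,∞)` with density `x^{2β+1} e^{−x²}`. -/
noncomputable def nu1 (β : ℝ) : Measure ℝ :=
  ((volume : Measure ℝ).withDensity fun x =>
    ENNReal.ofReal (x ^ (2 * β + 1) * Real.exp (-x ^ 2))).restrict (Set.Ioi 0)

/-- The one-dimensional kernel
`K_s^γ(x,y) = s^{−1/2} (x + √s)^{−2γ−1} exp(x² − ((1+s)x − (1−s)y)²/(8s))`. -/
noncomputable def Kker1 (γ s x y : ℝ) : ℝ :=
  s ^ (-(1 : ℝ) / 2) * (x + Real.sqrt s) ^ (-(2 * γ + 1)) *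
    Real.exp (x ^ 2 - ((1 + s) * x - (1 - s) * y) ^ 2 / (8 * s))

/-!
For `x ∈ (0,1)` and `s ∈ (1/4,1)` the factors `s^{-1/2}` and `(x + √s)^{-2γ-1}` of `K_s^γ` are
bounded, and its exponent is at most `1 - ((1+s)x - (1-s)y)² / 8`. So the kernel of `N₃^γ` is
bounded, and `ν_γ(0,1) < ∞` because `γ > -1`. In `N₂^β` the weight `((1-s)y)^{-2β}` is absorbed
by that Gaussian factor, which leaves a kernel bounded by `C x^{-2β}`, and
`∫₀¹ x^{-2β} dν_β = ∫₀¹ x e^{-x²} dx` is finite. A kernel bounded by an integrable function of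
`x` alone gives strong type `(1,1)` by Tonelli.
-/

open Real Set ENNReal

lemma rpow_le_two_rpow_abs {b : ℝ} (e : ℝ) (hb₁ : 1 / 2 ≤ b) (hb₂ : b ≤ 2) :
    b ^ e ≤ 2 ^ |e| := by
  have hb₀ : 0 < b := by linarith
  rcases le_or_gt 0 e with he | he
  · calc b ^ e ≤ 2 ^ e := rpow_le_rpow hb₀.le hb₂ he
      _ ≤ 2 ^ |e| := rpow_le_rpow_of_exponent_le one_le_two (le_abs_self e)
  · calc b ^ e ≤ (1 / 2) ^ e := rpow_le_rpow_of_nonpos (by norm_num) hb₁ he.le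
      _ = 2 ^ |e| := by
        rw [abs_of_neg he, one_div, inv_rpow zero_le_two, ← rpow_neg zero_le_two]

lemma rpow_neg_half_le_two {s : ℝ} (hs : 1 / 4 ≤ s) : s ^ (-(1 : ℝ) / 2) ≤ 2 := by
  have hsqrt : 1 / 2 ≤ √s := (le_sqrt (by norm_num) (by linarith)).2 (by linarith)
  rw [neg_div, rpow_neg (by linarith), ← sqrt_eq_rpow, inv_le_comm₀ (by linarith) two_pos]
  linarith

/-- Completing the square, `(u - c)² / 8 ≥ u / 4 - (1 + 2c) / 8`, so the Gaussian factor
beats the exponential bound `u ^ a ≤ (4a) ^ a e^{u/4}`. -/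
lemma rpow_mul_exp_neg_sub_sq_le {a u : ℝ} (c : ℝ) (ha : 0 ≤ a) (hu : 0 ≤ u) :
    u ^ a * exp (-(u - c) ^ 2 / 8) ≤ (4 * a) ^ a * exp ((1 + 2 * c) / 8) := by
  have hpow : u ^ a ≤ (4 * a) ^ a * exp (u / 4) := by
    simpa [abs_of_nonneg hu, div_eq_inv_mul] using
      ProbabilityTheory.rpow_abs_le_mul_exp_abs u ha (t := 1 / 4) (by norm_num)
  calc u ^ a * exp (-(u - c) ^ 2 / 8)
      ≤ (4 * a) ^ a * exp (u / 4) * exp (-(u - c) ^ 2 / 8) := by gcongr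
    _ = (4 * a) ^ a * exp ((1 + 2 * c) / 8 - (u - c - 1) ^ 2 / 8) := by
        rw [mul_assoc, ← exp_add]; ring_nf
    _ ≤ (4 * a) ^ a * exp ((1 + 2 * c) / 8) := by
        gcongr
        linarith [sq_nonneg (u - c - 1)]

section Kernel

variable {γ s x : ℝ}

lemma Kker1_le_mul_exp (hx : x ∈ Ioo 0 1) (hs : s ∈ Ioo (1 / 4) 1) (y : ℝ) :
    Kker1 γ s x y ≤
      2 * 2 ^ |2 * γ + 1| * exp 1 * exp (-((1 + s) * x - (1 - s) * y) ^ 2 / 8) := by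
  obtain ⟨hx₀, hx₁⟩ := hx
  obtain ⟨hs₀, hs₁⟩ := hs
  have hsqrt : 1 / 2 ≤ √s := (le_sqrt (by norm_num) (by linarith)).2 (by linarith)
  have hsqrt₁ : √s ≤ 1 := sqrt_le_one.2 hs₁.le
  have hpow : (x + √s) ^ (-(2 * γ + 1)) ≤ 2 ^ |2 * γ + 1| := by
    simpa only [abs_neg] using rpow_le_two_rpow_abs (-(2 * γ + 1)) (by linarith) (by linarith)
  unfold Kker1
  set N := (1 + s) * x - (1 - s) * y
  have hexp : exp (x ^ 2 - N ^ 2 / (8 * s)) ≤ exp 1 * exp (-N ^ 2 / 8) := by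
    rw [← exp_add]
    gcongr
    have : N ^ 2 / 8 ≤ N ^ 2 / (8 * s) := by gcongr; linarith
    nlinarith
  calc s ^ (-(1 : ℝ) / 2) * (x + √s) ^ (-(2 * γ + 1)) * exp (x ^ 2 - N ^ 2 / (8 * s))
      ≤ 2 * 2 ^ |2 * γ + 1| * (exp 1 * exp (-N ^ 2 / 8)) := by
        gcongr
        exact rpow_neg_half_le_two hs₀.le
    _ = 2 * 2 ^ |2 * γ + 1| * exp 1 * exp (-N ^ 2 / 8) := by ring

lemma Kker1_le (hx : x ∈ Ioo 0 1) (hs : s ∈ Ioo (1 / 4) 1) (y : ℝ) :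
    Kker1 γ s x y ≤ 2 * 2 ^ |2 * γ + 1| * exp 1 := by
  refine (Kker1_le_mul_exp hx hs y).trans (mul_le_of_le_one_right (by positivity) ?_)
  rw [exp_le_one_iff]
  nlinarith [sq_nonneg ((1 + s) * x - (1 - s) * y)]

lemma exists_rpow_mul_Kker1_le {β : ℝ} (hβ : β ≤ 0) :
    ∃ C : ℝ, ∀ x ∈ Ioo (0 : ℝ) 1, ∀ y, 0 < y → ∀ s ∈ Ioo (1 / 4 : ℝ) 1,
      (x * y) ^ (-2 * β) * ((1 - s) ^ (-2 * β) * Kker1 (-β) s x y) ≤ C * x ^ (-2 * β) := by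
  set a := -2 * β
  have ha : 0 ≤ a := by linarith
  refine ⟨2 * 2 ^ |2 * -β + 1| * exp 1 * ((4 * a) ^ a * exp (5 / 8)), ?_⟩
  intro x ⟨hx₀, hx₁⟩ y hy s ⟨hs₀, hs₁⟩
  set u := (1 - s) * y
  set c := (1 + s) * x
  have hgauss : u ^ a * exp (-(c - u) ^ 2 / 8) ≤ (4 * a) ^ a * exp (5 / 8) := by
    have hc : c ≤ 2 := by nlinarith
    calc u ^ a * exp (-(c - u) ^ 2 / 8) = u ^ a * exp (-(u - c) ^ 2 / 8) := by ring_nf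
      _ ≤ (4 * a) ^ a * exp ((1 + 2 * c) / 8) :=
          rpow_mul_exp_neg_sub_sq_le c ha (mul_nonneg (by linarith) hy.le)
      _ ≤ (4 * a) ^ a * exp (5 / 8) := by gcongr; linarith
  have hsplit : (x * y) ^ a * (1 - s) ^ a = x ^ a * u ^ a := by
    rw [mul_rpow hx₀.le hy.le, mul_rpow (by linarith) hy.le]; ring
  calc (x * y) ^ a * ((1 - s) ^ a * Kker1 (-β) s x y)
      ≤ (x * y) ^ a * ((1 - s) ^ a *
          (2 * 2 ^ |2 * -β + 1| * exp 1 * exp (-(c - u) ^ 2 / 8))) := by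
        have : 0 ≤ (1 - s) ^ a := rpow_nonneg (by linarith) _
        gcongr
        exact Kker1_le_mul_exp ⟨hx₀, hx₁⟩ ⟨hs₀, hs₁⟩ y
    _ = 2 * 2 ^ |2 * -β + 1| * exp 1 * (u ^ a * exp (-(c - u) ^ 2 / 8)) * x ^ a := by
        rw [← mul_assoc, ← mul_assoc, hsplit]; ring
    _ ≤ 2 * 2 ^ |2 * -β + 1| * exp 1 * ((4 * a) ^ a * exp (5 / 8)) * x ^ a := by
        gcongr

end Kernel

lemma ae_nu1_pos (β : ℝ) : ∀ᵐ y ∂nu1 β, 0 < y :=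
  ae_restrict_mem measurableSet_Ioi

lemma setLIntegral_nu1 (β : ℝ) {t : Set ℝ} (ht : MeasurableSet t) (hts : t ⊆ Ioi 0)
    {g : ℝ → ℝ≥0∞} (hg : Measurable g) :
    ∫⁻ x in t, g x ∂nu1 β = ∫⁻ x in t, ENNReal.ofReal (x ^ (2 * β + 1) * exp (-x ^ 2)) * g x := by
  rw [nu1, Measure.restrict_restrict ht, inter_eq_left.2 hts, restrict_withDensity ht,
    lintegral_withDensity_eq_lintegral_mul _ (by fun_prop) hg]
  rfl

lemma setLIntegral_Ioo_nu1_rpow_le_one (β : ℝ) :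
    ∫⁻ x in Ioo 0 1, ENNReal.ofReal (x ^ (-2 * β)) ∂nu1 β ≤ 1 := by
  rw [setLIntegral_nu1 β measurableSet_Ioo Ioo_subset_Ioi_self (by fun_prop)]
  calc ∫⁻ x in Ioo 0 1,
        ENNReal.ofReal (x ^ (2 * β + 1) * exp (-x ^ 2)) * ENNReal.ofReal (x ^ (-2 * β))
      ≤ ∫⁻ _ in Ioo (0 : ℝ) 1, 1 := by
        refine setLIntegral_mono' measurableSet_Ioo fun x ⟨hx₀, hx₁⟩ => ?_
        have hx : x ^ (2 * β + 1) * x ^ (-2 * β) = x := by rw [← rpow_add hx₀]; norm_num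
        rw [← ENNReal.ofReal_mul (by positivity), ENNReal.ofReal_le_one,
          mul_right_comm, hx]
        nlinarith [exp_le_one_iff.2 (neg_nonpos.2 (sq_nonneg x)), exp_pos (-x ^ 2)]
    _ = 1 := by simp

lemma nu1_Ioo_zero_one_lt_top {γ : ℝ} (hγ : -1 < γ) : nu1 γ (Ioo 0 1) < ⊤ := by
  rw [← setLIntegral_one,
    setLIntegral_nu1 γ measurableSet_Ioo Ioo_subset_Ioi_self measurable_const]
  have hint : IntegrableOn (fun x : ℝ => x ^ (2 * γ + 1)) (Ioo 0 1) :=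
    (intervalIntegral.integrableOn_Ioo_rpow_iff zero_lt_one).2 (by linarith)
  calc ∫⁻ x in Ioo 0 1, ENNReal.ofReal (x ^ (2 * γ + 1) * exp (-x ^ 2)) * 1
      ≤ ∫⁻ x in Ioo 0 1, ENNReal.ofReal (x ^ (2 * γ + 1)) := by
        refine setLIntegral_mono' measurableSet_Ioo fun x hx => ?_
        rw [mul_one]
        refine ENNReal.ofReal_le_ofReal (mul_le_of_le_one_right (rpow_nonneg hx.1.le _) ?_)
        exact exp_le_one_iff.2 (neg_nonpos.2 (sq_nonneg x))
    _ < ⊤ := hint.lintegral_lt_top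

lemma exists_lintegral_indicator_lintegral_le {α : Type*} [MeasurableSpace α] {μ : Measure α}
    {t : Set α} (ht : MeasurableSet t) {k : α → α → ℝ≥0∞} {w : α → ℝ≥0∞}
    (hk : ∀ x ∈ t, ∀ᵐ y ∂μ, k x y ≤ w x) (hw : ∫⁻ x in t, w x ∂μ ≠ ⊤) :
    ∃ C : ℝ, 0 < C ∧ ∀ f : α → ℝ, (∀ y, 0 ≤ f y) → Integrable f μ →
      ∫⁻ x, t.indicator (fun x => ∫⁻ y, k x y * ENNReal.ofReal (f y) ∂μ) x ∂μ ≤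
        ENNReal.ofReal (C * ∫ y, f y ∂μ) := by
  refine ⟨(∫⁻ x in t, w x ∂μ).toReal + 1, by positivity, fun f hf hfi => ?_⟩
  have hI : ∫⁻ y, ENNReal.ofReal (f y) ∂μ = ENNReal.ofReal (∫ y, f y ∂μ) :=
    (ofReal_integral_eq_lintegral_ofReal hfi (.of_forall hf)).symm
  have hinner : ∀ x ∈ t, ∫⁻ y, k x y * ENNReal.ofReal (f y) ∂μ ≤
      w x * ENNReal.ofReal (∫ y, f y ∂μ) := fun x hx => by
    rw [← hI, ← lintegral_const_mul'' _ hfi.aemeasurable.ennreal_ofReal]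
    exact lintegral_mono_ae ((hk x hx).mono fun y hy => mul_le_mul_left hy _)
  calc ∫⁻ x, t.indicator (fun x => ∫⁻ y, k x y * ENNReal.ofReal (f y) ∂μ) x ∂μ
      = ∫⁻ x in t, ∫⁻ y, k x y * ENNReal.ofReal (f y) ∂μ ∂μ := lintegral_indicator ht _
    _ ≤ ∫⁻ x in t, w x * ENNReal.ofReal (∫ y, f y ∂μ) ∂μ := setLIntegral_mono' ht hinner
    _ = (∫⁻ x in t, w x ∂μ) * ENNReal.ofReal (∫ y, f y ∂μ) :=
        lintegral_mul_const' _ _ ofReal_ne_top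
    _ ≤ ENNReal.ofReal ((∫⁻ x in t, w x ∂μ).toReal + 1) * ENNReal.ofReal (∫ y, f y ∂μ) := by
        gcongr
        rw [ENNReal.ofReal_add toReal_nonneg zero_le_one, ofReal_toReal hw]
        exact le_self_add
    _ = _ := (ENNReal.ofReal_mul (by positivity)).symm

/-- For `β ≤ −1` and `γ > −1`, the operators
`N₂^β f(x) = χ_{(0,1)}(x) ∫₀^∞ [(xy)^{−2β} sup_{1/4<s<1} (1−s)^{−2β} K_s^{−β}(x,y)] f(y) dν_β(y)`
and `N₃^γ f(x) = χ_{(0,1)}(x) ∫₀^∞ [sup_{1/4<s<1} K_s^γ(x,y)] f(y) dν_γ(y)`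
are of strong type `(1,1)` with respect to `ν_β`, resp. `ν_γ`. -/
theorem stmt12 (β γ : ℝ) (hβ : β ≤ -1) (hγ : -1 < γ) :
    (∃ C : ℝ, 0 < C ∧ ∀ f : ℝ → ℝ, (∀ y, 0 ≤ f y) → Integrable f (nu1 β) →
      (∫⁻ x, Set.indicator (Set.Ioo (0 : ℝ) 1)
          (fun x => ∫⁻ y,
            ENNReal.ofReal ((x * y) ^ (-2 * β)) *
              (⨆ s ∈ Set.Ioo (1 / 4 : ℝ) 1,
                ENNReal.ofReal ((1 - s) ^ (-2 * β) * Kker1 (-β) s x y)) *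
              ENNReal.ofReal (f y) ∂(nu1 β)) x ∂(nu1 β)) ≤
        ENNReal.ofReal (C * ∫ y, f y ∂(nu1 β))) ∧
    (∃ C : ℝ, 0 < C ∧ ∀ f : ℝ → ℝ, (∀ y, 0 ≤ f y) → Integrable f (nu1 γ) →
      (∫⁻ x, Set.indicator (Set.Ioo (0 : ℝ) 1)
          (fun x => ∫⁻ y,
            (⨆ s ∈ Set.Ioo (1 / 4 : ℝ) 1, ENNReal.ofReal (Kker1 γ s x y)) *
              ENNReal.ofReal (f y) ∂(nu1 γ)) x ∂(nu1 γ)) ≤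
        ENNReal.ofReal (C * ∫ y, f y ∂(nu1 γ))) := by
  constructor
  · obtain ⟨C, hC⟩ := exists_rpow_mul_Kker1_le (β := β) (by linarith)
    refine exists_lintegral_indicator_lintegral_le measurableSet_Ioo
      (w := fun x => ENNReal.ofReal C * ENNReal.ofReal (x ^ (-2 * β))) (fun x hx => ?_) ?_
    · filter_upwards [ae_nu1_pos β] with y hy
      simp only [ENNReal.mul_iSup]
      refine iSup₂_le fun s hs => ?_
      rw [← ENNReal.ofReal_mul (rpow_nonneg (mul_nonneg hx.1.le hy.le) _),
        ← ENNReal.ofReal_mul' (rpow_nonneg hx.1.le _)]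
      exact ENNReal.ofReal_le_ofReal (hC x hx y hy s hs)
    · rw [lintegral_const_mul _ (by fun_prop)]
      exact mul_ne_top ofReal_ne_top (ne_top_of_le_ne_top one_ne_top
        (setLIntegral_Ioo_nu1_rpow_le_one β))
  · refine exists_lintegral_indicator_lintegral_le measurableSet_Ioo
      (w := fun _ => ENNReal.ofReal (2 * 2 ^ |2 * γ + 1| * exp 1))
      (fun x hx => .of_forall fun y => iSup₂_le fun s hs =>
        ENNReal.ofReal_le_ofReal (Kker1_le hx hs y)) ?_
    rw [setLIntegral_const]
    exact mul_ne_top ofReal_ne_top (nu1_Ioo_zero_one_lt_top hγ).ne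
end
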